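/- Let N be an even positive integer with N ≥ 4, let R ≥ 0 be a real number, let A : ℕ → ℂ with A(0) real and nonnegative, and define J(τ) = ∑_{u=0}^{N/2−1} |A(u) + R·exp(i·2πτu/N)|² for integer τ. Then the quantity E := (1/N) ∑_{τ=1}^{N} J(τ) − ∑_{u₁=1}^{N/2−1} |A(u₁)|² − (N/2 − 1)·R² is nonnegative, and A(0) = √E − R. -/

import Mathlib

/-!
Averaging the hologram over a full period τ = 1, …, N kills every interference term
`A(u) · exp(-2πiτu/N)` with `0 < u < N`, by orthogonality of the `N`-th roots of unity. What
survives is `(1/N) ∑_τ J(τ) = ∑_{u < N/2} |A(u)|² + (N/2) R² + 2 R A(0)`, so that the quantity `E`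
of the statement equals `(A(0) + R)²`, and `A(0) + R ≥ 0`.
-/

open Real Complex Finset

theorem Finset.sum_Icc_one_natCast_eq_sum_range {M : Type*} [AddCommMonoid M] (f : ℤ → M)
    (N : ℕ) : ∑ τ ∈ Icc (1 : ℤ) N, f τ = ∑ t ∈ range N, f (t + 1) := by
  symm
  refine sum_nbij' (fun t : ℕ ↦ (t : ℤ) + 1) (fun τ ↦ (τ - 1).toNat) ?_ ?_ ?_ ?_ ?_ <;>
    intros <;> simp_all <;> omega

theorem Finset.add_sum_Icc_one_sub_one_eq_sum_range {M : Type*} [AddCommMonoid M] (f : ℕ → M)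
    {n : ℕ} (hn : 0 < n) : f 0 + ∑ u ∈ Icc 1 (n - 1), f u = ∑ u ∈ range n, f u := by
  rw [range_eq_Ico, sum_eq_sum_Ico_succ_bot hn, ← Ico_add_one_right_eq_Icc,
    Nat.sub_one_add_one hn.ne', zero_add]

theorem sum_Icc_one_zpow_eq_zero_of_pow_eq_one {K : Type*} [DivisionRing K] {x : K} {N : ℕ}
    (hxN : x ^ N = 1) (hx : x ≠ 1) : ∑ τ ∈ Icc (1 : ℤ) N, x ^ τ = 0 := by
  simp_rw [sum_Icc_one_natCast_eq_sum_range, ← Nat.cast_succ, zpow_natCast, pow_succ',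
    ← mul_sum, geom_sum_eq hx, hxN, sub_self, zero_div, mul_zero]

theorem Complex.sq_norm_add_ofReal_mul_of_norm_eq_one (a w : ℂ) (r : ℝ) (hw : ‖w‖ = 1) :
    ‖a + r * w‖ ^ 2 = ‖a‖ ^ 2 + r ^ 2 + 2 * r * (a * starRingEnd ℂ w).re := by
  rw [Complex.sq_norm, Complex.sq_norm, normSq_add, normSq_mul, normSq_ofReal,
    normSq_eq_norm_sq w, hw, map_mul, conj_ofReal, mul_left_comm, re_ofReal_mul]
  ring

noncomputable def fourierPhase (N : ℕ) (τ : ℤ) (u : ℕ) : ℂ :=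
  exp (I * ((2 * π * τ * u / N : ℝ) : ℂ))

theorem fourierPhase_eq_zpow (N : ℕ) (τ : ℤ) (u : ℕ) :
    fourierPhase N τ u = (exp (2 * π * I / N) ^ u) ^ τ := by
  rw [fourierPhase, ← Complex.exp_nat_mul, ← Complex.exp_int_mul]
  congr 1
  push_cast
  ring

theorem norm_fourierPhase (N : ℕ) (τ : ℤ) (u : ℕ) : ‖fourierPhase N τ u‖ = 1 :=
  norm_exp_I_mul_ofReal _

theorem sum_fourierPhase {N : ℕ} (hN : N ≠ 0) (u : ℕ) :
    ∑ τ ∈ Icc (1 : ℤ) N, fourierPhase N τ u = if N ∣ u then (N : ℂ) else 0 := by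
  have hζ := isPrimitiveRoot_exp N hN
  simp only [fourierPhase_eq_zpow]
  split_ifs with hu
  · rw [(hζ.pow_eq_one_iff_dvd u).2 hu]
    simp
  · refine sum_Icc_one_zpow_eq_zero_of_pow_eq_one ?_ (mt (hζ.pow_eq_one_iff_dvd u).1 hu)
    rw [pow_right_comm, hζ.pow_eq_one, one_pow]

theorem sum_sq_norm_add_mul_fourierPhase {N : ℕ} (hN : N ≠ 0) (a : ℂ) (r : ℝ) (u : ℕ) :
    ∑ τ ∈ Icc (1 : ℤ) N, ‖a + r * fourierPhase N τ u‖ ^ 2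
      = N * (‖a‖ ^ 2 + r ^ 2) + if N ∣ u then 2 * r * N * a.re else 0 := by
  have hcard : #(Icc (1 : ℤ) N) = N := by simp
  have hcross : ∑ τ ∈ Icc (1 : ℤ) N, (a * starRingEnd ℂ (fourierPhase N τ u)).re
      = if N ∣ u then N * a.re else 0 := by
    rw [← re_sum, ← mul_sum, ← map_sum, sum_fourierPhase hN]
    split_ifs <;> simp [mul_comm]
  simp only [sq_norm_add_ofReal_mul_of_norm_eq_one _ _ _ (norm_fourierPhase N _ u),
    sum_add_distrib, sum_const, hcard, nsmul_eq_mul, ← mul_sum, hcross]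
  split_ifs <;> ring

theorem sum_sum_range_sq_norm_add_mul_fourierPhase {N M : ℕ} (hMN : M ≤ N) (hM : 0 < M)
    (A : ℕ → ℂ) (r : ℝ) :
    ∑ τ ∈ Icc (1 : ℤ) N, ∑ u ∈ range M, ‖A u + r * fourierPhase N τ u‖ ^ 2
      = N * (∑ u ∈ range M, ‖A u‖ ^ 2 + M * r ^ 2 + 2 * r * (A 0).re) := by
  have hN : N ≠ 0 := by omega
  have hdvd : ∀ u ∈ range M, N ∣ u ↔ u = 0 := fun u hu ↦
    ⟨fun h ↦ Nat.eq_zero_of_dvd_of_lt h (by simp at hu; omega), fun h ↦ h ▸ dvd_zero N⟩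
  rw [sum_comm, sum_congr rfl fun u _ ↦ sum_sq_norm_add_mul_fourierPhase hN (A u) r u,
    sum_add_distrib, ← mul_sum, sum_add_distrib, sum_const, card_range, nsmul_eq_mul,
    sum_congr rfl fun u hu ↦ if_congr (hdvd u hu) rfl rfl, sum_ite_eq', if_pos (mem_range.2 hM)]
  ring

theorem stmt15 (N : ℕ) (hNeven : Even N) (hN : 4 ≤ N)
    (R : ℝ) (hR : 0 ≤ R) (A : ℕ → ℂ)
    (hA0im : (A 0).im = 0) (hA0re : 0 ≤ (A 0).re) (J : ℤ → ℝ)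
    (hJ : ∀ τ : ℤ, J τ = ∑ u ∈ Finset.range (N / 2), (‖A u + (R : ℂ) * Complex.exp (Complex.I * ((2 * Real.pi * (τ : ℝ) * (u : ℝ) / (N : ℝ) : ℝ) : ℂ))‖) ^ 2) :
    0 ≤ (1 / (N : ℝ)) * ∑ τ ∈ Finset.Icc (1 : ℤ) (N : ℤ), J τ - ∑ u₁ ∈ Finset.Icc 1 (N / 2 - 1), (‖A u₁‖) ^ 2 - ((N : ℝ) / 2 - 1) * R ^ 2 ∧
    A 0 = ((Real.sqrt ((1 / (N : ℝ)) * ∑ τ ∈ Finset.Icc (1 : ℤ) (N : ℤ), J τ - ∑ u₁ ∈ Finset.Icc 1 (N / 2 - 1), (‖A u₁‖) ^ 2 - ((N : ℝ) / 2 - 1) * R ^ 2) - R : ℝ) : ℂ) := by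
  have hA0 : A 0 = ((A 0).re : ℂ) := Complex.ext (by simp) (by simpa using hA0im)
  have hnorm : ‖A 0‖ ^ 2 = (A 0).re ^ 2 := by rw [Complex.sq_norm, normSq_apply, hA0im]; ring
  have hM : ((N / 2 : ℕ) : ℝ) = N / 2 := Nat.cast_div_charZero (even_iff_two_dvd.1 hNeven)
  have hsum := add_sum_Icc_one_sub_one_eq_sum_range (fun u ↦ ‖A u‖ ^ 2) (n := N / 2) (by omega)
  have hJ' (τ : ℤ) : J τ = ∑ u ∈ range (N / 2), ‖A u + R * fourierPhase N τ u‖ ^ 2 := hJ τ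
  have hE : (1 / (N : ℝ)) * ∑ τ ∈ Icc (1 : ℤ) N, J τ - ∑ u ∈ Icc 1 (N / 2 - 1), ‖A u‖ ^ 2
      - ((N : ℝ) / 2 - 1) * R ^ 2 = ((A 0).re + R) ^ 2 := by
    rw [sum_congr rfl fun τ _ ↦ hJ' τ,
      sum_sum_range_sq_norm_add_mul_fourierPhase (by omega) (by omega), ← hsum, hM, hnorm,
      one_div, inv_mul_cancel_left₀ (by positivity)]
    ring
  rw [hE, sqrt_sq (by positivity), add_sub_cancel_right]
  exact ⟨sq_nonneg _, hA0⟩
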